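/- Fix ε₁, ε₂, λ > 0 and suppose β₂ > β₂' > 0, β₁ < β₁' with β₁ + β₂ = β₁' + β₂' and ε₂ > ε₁. Then I(ε₁,ε₂,β₁,β₂,λ) > I(ε₁,ε₂,β₁',β₂',λ), where I(ε₁,ε₂,β₁,β₂,λ) = ∫₀^∞ exp(−(x + β₁/(1+ε₁x) + β₂/(1+ε₂x)))/((1+ε₁x)^λ(1+ε₂x)) dx. -/
import Mathlib


open Real MeasureTheory

theorem stmt_19 (ε₁ ε₂ lam β₁ β₂ β₁' β₂' : ℝ) (hε₁ : 0 < ε₁) (hε₂ : 0 < ε₂) (hlam : 0 < lam)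
    (hβ₂' : 0 < β₂') (hβ₂ : β₂' < β₂) (hβ₁ : 0 < β₁) (hβ₁' : β₁ < β₁')
    (hsum : β₁ + β₂ = β₁' + β₂') (hε : ε₁ < ε₂) :
    (∫ x in Set.Ioi (0:ℝ),
        Real.exp (-(x + β₁' / (1 + ε₁ * x) + β₂' / (1 + ε₂ * x)))
          / ((1 + ε₁ * x) ^ lam * (1 + ε₂ * x)))
    < (∫ x in Set.Ioi (0:ℝ),
        Real.exp (-(x + β₁ / (1 + ε₁ * x) + β₂ / (1 + ε₂ * x)))
          / ((1 + ε₁ * x) ^ lam * (1 + ε₂ * x))) := by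
  set f : ℝ → ℝ := fun x => Real.exp (-(x + β₁ / (1 + ε₁ * x) + β₂ / (1 + ε₂ * x)))
      / ((1 + ε₁ * x) ^ lam * (1 + ε₂ * x)) with hfdef
  set g : ℝ → ℝ := fun x => Real.exp (-(x + β₁' / (1 + ε₁ * x) + β₂' / (1 + ε₂ * x)))
      / ((1 + ε₁ * x) ^ lam * (1 + ε₂ * x)) with hgdef
  have hd1 : ∀ x ∈ Set.Ioi (0:ℝ), 0 < 1 + ε₁ * x := fun x hx => by
    have : (0:ℝ) < x := hx; nlinarith
  have hd2 : ∀ x ∈ Set.Ioi (0:ℝ), 0 < 1 + ε₂ * x := fun x hx => by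
    have : (0:ℝ) < x := hx; nlinarith
  have hden1 : ∀ x ∈ Set.Ioi (0:ℝ), 1 ≤ (1 + ε₁ * x) ^ lam * (1 + ε₂ * x) := by
    intro x hx
    have hx0 : (0:ℝ) < x := hx
    have h1 : (1:ℝ) ≤ (1 + ε₁ * x) ^ lam :=
      Real.one_le_rpow (by nlinarith) hlam.le
    have h2 : (1:ℝ) ≤ 1 + ε₂ * x := by nlinarith
    nlinarith
  -- continuity on Ioi 0
  have hcont : ∀ a b : ℝ, ContinuousOn (fun x => Real.exp (-(x + a / (1 + ε₁ * x) + b / (1 + ε₂ * x)))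
      / ((1 + ε₁ * x) ^ lam * (1 + ε₂ * x))) (Set.Ioi 0) := by
    intro a b
    have hc1 : ContinuousOn (fun x : ℝ => 1 + ε₁ * x) (Set.Ioi 0) :=
      (continuous_const.add (continuous_const.mul continuous_id)).continuousOn
    have hc2 : ContinuousOn (fun x : ℝ => 1 + ε₂ * x) (Set.Ioi 0) :=
      (continuous_const.add (continuous_const.mul continuous_id)).continuousOn
    apply ContinuousOn.div
    · exact Real.continuous_exp.comp_continuousOn
        (((continuousOn_id.add (continuousOn_const.div hc1 (fun x hx => (hd1 x hx).ne'))).add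
          (continuousOn_const.div hc2 (fun x hx => (hd2 x hx).ne'))).neg)
    · exact (hc1.rpow_const (fun x hx => Or.inl (hd1 x hx).ne')).mul hc2
    · intro x hx
      have := hd1 x hx; have := hd2 x hx
      positivity
  -- integrability
  have hint : ∀ a b : ℝ, 0 < a → 0 < b → IntegrableOn
      (fun x => Real.exp (-(x + a / (1 + ε₁ * x) + b / (1 + ε₂ * x)))
        / ((1 + ε₁ * x) ^ lam * (1 + ε₂ * x))) (Set.Ioi 0) := by
    intro a b ha hb
    have hmeas : AEStronglyMeasurable
        (fun x => Real.exp (-(x + a / (1 + ε₁ * x) + b / (1 + ε₂ * x)))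
          / ((1 + ε₁ * x) ^ lam * (1 + ε₂ * x))) (volume.restrict (Set.Ioi 0)) :=
      (hcont a b).aestronglyMeasurable measurableSet_Ioi
    have hdom : IntegrableOn (fun x : ℝ => Real.exp (-(1:ℝ) * x)) (Set.Ioi 0) :=
      exp_neg_integrableOn_Ioi 0 one_pos
    refine Integrable.mono hdom hmeas ?_
    rw [ae_restrict_iff' measurableSet_Ioi]
    filter_upwards with x hx
    have hx0 : (0:ℝ) < x := hx
    have h1 := hd1 x hx
    have h2 := hd2 x hx
    have hnum : Real.exp (-(x + a / (1 + ε₁ * x) + b / (1 + ε₂ * x))) ≤ Real.exp (-x) := by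
      apply Real.exp_le_exp.mpr
      have : 0 ≤ a / (1 + ε₁ * x) := by positivity
      have : 0 ≤ b / (1 + ε₂ * x) := by positivity
      linarith
    have hden := hden1 x hx
    rw [Real.norm_eq_abs, Real.norm_eq_abs, abs_of_nonneg (by positivity),
      abs_of_nonneg (Real.exp_pos _).le]
    calc Real.exp (-(x + a / (1 + ε₁ * x) + b / (1 + ε₂ * x)))
          / ((1 + ε₁ * x) ^ lam * (1 + ε₂ * x))
        ≤ Real.exp (-(x + a / (1 + ε₁ * x) + b / (1 + ε₂ * x))) :=
          div_le_self (Real.exp_pos _).le hden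
      _ ≤ Real.exp (-x) := hnum
      _ = Real.exp (-1 * x) := by ring_nf
  have hintf : IntegrableOn f (Set.Ioi 0) := hint β₁ β₂ hβ₁ (hβ₂'.trans hβ₂)
  have hintg : IntegrableOn g (Set.Ioi 0) := hint β₁' β₂' (hβ₁.trans hβ₁') hβ₂'
  -- pointwise strict inequality
  have hpt : ∀ x ∈ Set.Ioi (0:ℝ), g x < f x := by
    intro x hx
    have h1 := hd1 x hx
    have h2 := hd2 x hx
    have h12 : 1 + ε₁ * x < 1 + ε₂ * x := by
      have hx0 : (0:ℝ) < x := hx; nlinarith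
    have hδ : (0:ℝ) < β₁' - β₁ := by linarith
    have hkey : (β₁' - β₁) / (1 + ε₂ * x) < (β₁' - β₁) / (1 + ε₁ * x) :=
      div_lt_div_of_pos_left hδ h1 h12
    have hd : β₁' - β₁ = β₂ - β₂' := by linarith
    have e1 : (β₁' - β₁) / (1 + ε₂ * x) = β₂ / (1 + ε₂ * x) - β₂' / (1 + ε₂ * x) := by
      rw [← sub_div, hd]
    have e2 : (β₁' - β₁) / (1 + ε₁ * x) = β₁' / (1 + ε₁ * x) - β₁ / (1 + ε₁ * x) :=
      sub_div _ _ _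
    rw [e1, e2] at hkey
    have hexp : β₁ / (1 + ε₁ * x) + β₂ / (1 + ε₂ * x)
        < β₁' / (1 + ε₁ * x) + β₂' / (1 + ε₂ * x) := by linarith
    have := Real.exp_lt_exp.mpr (show -(x + β₁' / (1 + ε₁ * x) + β₂' / (1 + ε₂ * x))
        < -(x + β₁ / (1 + ε₁ * x) + β₂ / (1 + ε₂ * x)) by linarith)
    have hden : 0 < (1 + ε₁ * x) ^ lam * (1 + ε₂ * x) := by positivity
    exact div_lt_div_of_pos_right this hden
  -- positivity of the difference integral
  have hpos : 0 < ∫ x in Set.Ioi (0:ℝ), (f x - g x) := by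
    rw [integral_pos_iff_support_of_nonneg_ae]
    · rw [Measure.restrict_apply' measurableSet_Ioi]
      have hsub : Set.Ioi (0:ℝ) ⊆ Function.support (fun x => f x - g x) := by
        intro x hx
        exact ne_of_gt (sub_pos.mpr (hpt x hx))
      rw [Set.inter_eq_right.mpr hsub, Real.volume_Ioi]
      exact ENNReal.zero_lt_top
    · filter_upwards [ae_restrict_mem measurableSet_Ioi] with x hx
      exact sub_nonneg.mpr (hpt x hx).le
    · exact hintf.sub hintg
  rw [integral_sub hintf hintg] at hpos
  linarith
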